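/- Let 1 < α < 2, 0 < β < 1, α - β > 1, h > 0, λ, μ ∈ ℝ, T > 0, and let f : [0,T] × ℝ → ℝ be continuous and satisfy |f(t,y) - f(t,z)| ≤ L_f |y - z| for all t ∈ [0,T], y, z ∈ ℝ, with L_f > 0. Let K : ℝ → ℝ be any measurable kernel satisfying |K(s)| ≤ s^{α-1} exp(|λ| s^{α-β} + |μ| s^α) for s ∈ [0,T]. Then the operator (𝔉y)(t) := g(t) + ∫_0^t K(t-s) f(s, y(s)) ds (for any fixed continuous g) is a contraction on C([0,T], ℝ) equipped with the weighted norm ‖y‖_ω = max_{0≤t≤T} |y(t)| / E_α(ω t^α), provided ω > L_f Γ(α) exp(|λ| T^{α-β} + |μ| T^α); its Lipschitz constant is at most (Γ(α)/ω) L_f exp(|λ| T^{α-β} + |μ| T^α) < 1. -/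

import Mathlib

/-- The one-parameter Mittag-Leffler function. -/
noncomputable def mittagLeffler (α z : ℝ) : ℝ :=
  ∑' k : ℕ, z ^ k / Real.Gamma (k * α + 1)

/-! Bound the kernel by `A (t - s) ^ (α - 1)` with `A = exp (|λ| T ^ (α - β) + |μ| T ^ α)` and the
difference of the nonlinearities by `L_f ‖y - z‖_ω E_α (ω s ^ α)`. Integrating the Mittag-Leffler
series termwise, each term being a Beta integral, gives
`∫₀ᵗ (t - s) ^ (α - 1) E_α (ω s ^ α) ds = Γ(α) / ω * (E_α (ω t ^ α) - 1)`, so dividing by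
`E_α (ω t ^ α)` yields the Lipschitz constant `Γ(α) / ω * L_f * A`, which is `< 1` by the choice
of `ω`. -/

open MeasureTheory Set Real
open scoped Nat

theorem factorial_le_Gamma_mul_add_one {α : ℝ} (hα : 1 ≤ α) (k : ℕ) :
    (k ! : ℝ) ≤ Gamma (k * α + 1) := by
  rw [← Gamma_nat_eq_factorial]
  rcases k.eq_zero_or_pos with rfl | hk
  · simp
  have hk : (1 : ℝ) ≤ k := by exact_mod_cast hk
  exact Gamma_strictMonoOn_Ici.monotoneOn (by simp; linarith) (by simp; nlinarith)
    (by nlinarith)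

theorem summable_mittagLeffler {α : ℝ} (hα : 1 ≤ α) (x : ℝ) :
    Summable fun k : ℕ => x ^ k / Gamma (k * α + 1) := by
  refine (summable_pow_div_factorial |x|).of_norm_bounded fun k => ?_
  rw [norm_div, norm_pow, norm_eq_abs, norm_of_nonneg (Gamma_pos_of_pos (by positivity)).le]
  exact div_le_div_of_nonneg_left (by positivity) (by positivity)
    (factorial_le_Gamma_mul_add_one hα k)

theorem mittagLeffler_zero (α : ℝ) : mittagLeffler α 0 = 1 := by
  rw [mittagLeffler, tsum_eq_single 0 fun k hk => by simp [hk]]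
  simp

theorem one_le_mittagLeffler {α x : ℝ} (hα : 1 ≤ α) (hx : 0 ≤ x) : 1 ≤ mittagLeffler α x := by
  have h0 : x ^ 0 / Gamma ((0 : ℕ) * α + 1) = 1 := by simp
  exact h0 ▸ (summable_mittagLeffler hα x).le_tsum 0 fun k _ => by
    have := Gamma_pos_of_pos (show 0 < (k : ℝ) * α + 1 by positivity)
    positivity

theorem continuous_mittagLeffler {α : ℝ} (hα : 1 ≤ α) : Continuous (mittagLeffler α) := by
  refine continuous_iff_continuousAt.2 fun x => ?_
  refine (continuousOn_tsum (fun k => (continuous_pow k).continuousOn.div_const _)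
    (summable_mittagLeffler hα (|x| + 1)) fun k y hy => ?_).continuousAt
    (Metric.isOpen_ball.mem_nhds (Metric.mem_ball_self one_pos))
  have hy : |y| ≤ |x| + 1 := by
    have := abs_sub_abs_le_abs_sub y x
    rw [Metric.mem_ball, dist_eq] at hy
    linarith
  rw [norm_div, norm_pow, norm_eq_abs, norm_of_nonneg (Gamma_pos_of_pos (by positivity)).le]
  gcongr

theorem integral_rpow_mul_one_sub_rpow {a b : ℝ} (ha : 0 < a) (hb : 0 < b) :
    ∫ x in (0 : ℝ)..1, x ^ (a - 1) * (1 - x) ^ (b - 1) = Gamma a * Gamma b / Gamma (a + b) := by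
  have h := Complex.betaIntegral_eq_Gamma_mul_div a b (by simpa using ha) (by simpa using hb)
  have hcongr : EqOn (fun x : ℝ => ((x ^ (a - 1) * (1 - x) ^ (b - 1) : ℝ) : ℂ))
      (fun x : ℝ => (x : ℂ) ^ ((a : ℂ) - 1) * (1 - (x : ℂ)) ^ ((b : ℂ) - 1)) (uIcc 0 1) := by
    intro x hx
    rw [uIcc_of_le zero_le_one] at hx
    push_cast [Complex.ofReal_cpow hx.1, Complex.ofReal_cpow (sub_nonneg.2 hx.2)]
    rfl
  rw [Complex.betaIntegral, ← intervalIntegral.integral_congr hcongr,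
    intervalIntegral.integral_ofReal, ← Complex.ofReal_add, Complex.Gamma_ofReal,
    Complex.Gamma_ofReal, Complex.Gamma_ofReal] at h
  exact_mod_cast h

theorem integral_sub_rpow_mul_rpow {a c t : ℝ} (ha : 0 < a) (hc : -1 < c) (ht : 0 < t) :
    ∫ s in (0 : ℝ)..t, (t - s) ^ (a - 1) * s ^ c
      = Gamma a * Gamma (c + 1) / Gamma (a + c + 1) * t ^ (a + c) := by
  have hcongr : EqOn (fun x => (t - t * x) ^ (a - 1) * (t * x) ^ c)
      (fun x => t ^ (a - 1) * t ^ c * (x ^ (c + 1 - 1) * (1 - x) ^ (a - 1))) (uIcc 0 1) := by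
    intro x hx
    rw [uIcc_of_le zero_le_one] at hx
    simp only
    rw [← mul_one_sub, mul_rpow ht.le (sub_nonneg.2 hx.2), mul_rpow ht.le hx.1,
      add_sub_cancel_right]
    ring
  have hpow : t * (t ^ (a - 1) * t ^ c) = t ^ (a + c) := by
    rw [show a + c = 1 + (a - 1 + c) by ring, rpow_add ht, rpow_one, rpow_add ht]
  have hscale : ∫ s in (0 : ℝ)..t, (t - s) ^ (a - 1) * s ^ c
      = t * ∫ x in (0 : ℝ)..1, (t - t * x) ^ (a - 1) * (t * x) ^ c := by
    rw [intervalIntegral.integral_comp_mul_left (fun s => (t - s) ^ (a - 1) * s ^ c) ht.ne',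
      mul_zero, mul_one, smul_eq_mul, mul_inv_cancel_left₀ ht.ne']
  rw [hscale, intervalIntegral.integral_congr hcongr, intervalIntegral.integral_const_mul,
    integral_rpow_mul_one_sub_rpow (by linarith) ha, ← mul_assoc, hpow,
    show c + 1 + a = a + c + 1 by ring]
  ring

theorem integral_sub_rpow_mul_mittagLeffler {α ω t : ℝ} (hα : 1 ≤ α) (hω : 0 < ω) (ht : 0 ≤ t) :
    ∫ s in (0 : ℝ)..t, (t - s) ^ (α - 1) * mittagLeffler α (ω * s ^ α)
      = Gamma α / ω * (mittagLeffler α (ω * t ^ α) - 1) := by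
  rcases ht.eq_or_lt with rfl | ht
  · simp [zero_rpow (by linarith : α ≠ 0), mittagLeffler_zero]
  have hΓ : ∀ k : ℕ, 0 < Gamma (k * α + 1) := fun k => Gamma_pos_of_pos (by positivity)
  set F : ℕ → ℝ → ℝ := fun k s => (t - s) ^ (α - 1) * ((ω * s ^ α) ^ k / Gamma (k * α + 1))
  have hF_nonneg : ∀ k, ∀ s ∈ Ioc 0 t, 0 ≤ F k s := fun k s hs => by
    have := hΓ k
    have := sub_nonneg.2 hs.2
    have := hs.1.le
    positivity
  have hF_cont : ∀ k, Continuous (F k) := fun k =>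
    ((continuous_rpow_const (by linarith)).comp (continuous_const.sub continuous_id)).mul
      (((continuous_const.mul (continuous_rpow_const (by linarith))).pow k).div_const _)
  have hF_int : ∀ k, ∫ s in Ioc 0 t, F k s
      = Gamma α / ω * ((ω * t ^ α) ^ (k + 1) / Gamma ((k + 1 : ℕ) * α + 1)) := by
    intro k
    have hcongr : EqOn (F k)
        (fun s => ω ^ k / Gamma (k * α + 1) * ((t - s) ^ (α - 1) * s ^ (α * k))) (uIcc 0 t) := by
      intro s hs
      rw [uIcc_of_le ht.le] at hs
      simp only [F, mul_pow, ← rpow_mul_natCast hs.1]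
      ring
    rw [← intervalIntegral.integral_of_le ht.le, intervalIntegral.integral_congr hcongr,
      intervalIntegral.integral_const_mul,
      integral_sub_rpow_mul_rpow (by linarith) (by linarith [show 0 ≤ α * k by positivity]) ht,
      mul_pow, ← rpow_mul_natCast ht.le]
    have := (hΓ k).ne'
    rw [show α * k + 1 = k * α + 1 by ring,
      show α + α * k + 1 = (k + 1 : ℕ) * α + 1 by push_cast; ring,
      show α * (k + 1 : ℕ) = α + α * k by push_cast; ring]
    field_simp
    ring
  have hsum : Summable fun k => ∫ s in Ioc 0 t, ‖F k s‖ := by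
    refine (((summable_nat_add_iff 1).2 (summable_mittagLeffler hα (ω * t ^ α))).mul_left
      (Gamma α / ω)).congr fun k => ?_
    rw [← hF_int]
    exact setIntegral_congr_fun measurableSet_Ioc fun s hs =>
      (norm_of_nonneg (hF_nonneg k s hs)).symm
  calc ∫ s in (0 : ℝ)..t, (t - s) ^ (α - 1) * mittagLeffler α (ω * s ^ α)
      = ∫ s in Ioc 0 t, ∑' k, F k s := by
        rw [intervalIntegral.integral_of_le ht.le]
        exact setIntegral_congr_fun measurableSet_Ioc fun s _ => tsum_mul_left.symm
    _ = ∑' k, ∫ s in Ioc 0 t, F k s :=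
        (integral_tsum_of_summable_integral_norm (fun k => (hF_cont k).integrableOn_Ioc) hsum).symm
    _ = Gamma α / ω * (mittagLeffler α (ω * t ^ α) - 1) := by
        rw [tsum_congr hF_int, tsum_mul_left, mittagLeffler,
          (summable_mittagLeffler hα _).tsum_eq_zero_add]
        simp

theorem intervalIntegrable_comp_sub_mul {t C : ℝ} {K F : ℝ → ℝ} (ht : 0 ≤ t)
    (hK_meas : Measurable K) (hK : ∀ r ∈ Icc 0 t, |K r| ≤ C) (hF : ContinuousOn F (Icc 0 t)) :
    IntervalIntegrable (fun s => K (t - s) * F s) volume 0 t := by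
  refine IntervalIntegrable.mul_continuousOn ?_ (by rwa [uIcc_of_le ht])
  rw [intervalIntegrable_iff_integrableOn_Ioc_of_le ht]
  refine Measure.integrableOn_of_bounded measure_Ioc_lt_top.ne
    (hK_meas.comp (measurable_const.sub measurable_id)).aestronglyMeasurable (M := C)
    ((ae_restrict_iff' measurableSet_Ioc).2 (ae_of_all _ fun s hs => ?_))
  exact hK (t - s) ⟨sub_nonneg.2 hs.2, by linarith [hs.1]⟩

theorem abs_integral_comp_sub_mul_le {α ω t A M : ℝ} {K u : ℝ → ℝ} (hα : 1 ≤ α) (hω : 0 < ω)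
    (ht : 0 ≤ t) (hK : ∀ r ∈ Icc 0 t, |K r| ≤ A * r ^ (α - 1))
    (hu : ∀ s ∈ Icc 0 t, |u s| ≤ M * mittagLeffler α (ω * s ^ α)) :
    |∫ s in (0 : ℝ)..t, K (t - s) * u s|
      ≤ A * M * (Gamma α / ω * (mittagLeffler α (ω * t ^ α) - 1)) := by
  have hg : Continuous fun s => A * M * ((t - s) ^ (α - 1) * mittagLeffler α (ω * s ^ α)) :=
    continuous_const.mul
      (((continuous_rpow_const (by linarith)).comp (continuous_const.sub continuous_id)).mul
        ((continuous_mittagLeffler hα).comp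
          (continuous_const.mul (continuous_rpow_const (by linarith)))))
  calc |∫ s in (0 : ℝ)..t, K (t - s) * u s|
      ≤ ∫ s in (0 : ℝ)..t, A * M * ((t - s) ^ (α - 1) * mittagLeffler α (ω * s ^ α)) := by
        rw [← norm_eq_abs]
        refine intervalIntegral.norm_integral_le_of_norm_le ht
          (ae_of_all _ fun s hs => ?_) (hg.intervalIntegrable (μ := volume) 0 t)
        have hKs := hK (t - s) ⟨sub_nonneg.2 hs.2, by linarith [hs.1]⟩
        rw [norm_mul, norm_eq_abs, norm_eq_abs]
        calc |K (t - s)| * |u s| ≤ A * (t - s) ^ (α - 1) * (M * mittagLeffler α (ω * s ^ α)) :=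
              mul_le_mul hKs (hu s (Ioc_subset_Icc_self hs)) (abs_nonneg _)
                ((abs_nonneg _).trans hKs)
          _ = _ := by ring
    _ = A * M * (Gamma α / ω * (mittagLeffler α (ω * t ^ α) - 1)) := by
        rw [intervalIntegral.integral_const_mul, integral_sub_rpow_mul_mittagLeffler hα hω ht]

theorem abs_integral_sub_integral_le {α ω t A M : ℝ} {K F G : ℝ → ℝ} (hα : 1 ≤ α) (hω : 0 < ω)
    (ht : 0 ≤ t) (hK_meas : Measurable K) (hK : ∀ r ∈ Icc 0 t, |K r| ≤ A * r ^ (α - 1))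
    (hF : ContinuousOn F (Icc 0 t)) (hG : ContinuousOn G (Icc 0 t))
    (hFG : ∀ s ∈ Icc 0 t, |F s - G s| ≤ M * mittagLeffler α (ω * s ^ α)) :
    |(∫ s in (0 : ℝ)..t, K (t - s) * F s) - ∫ s in (0 : ℝ)..t, K (t - s) * G s|
      ≤ A * M * (Gamma α / ω * (mittagLeffler α (ω * t ^ α) - 1)) := by
  have hK_bdd : ∀ r ∈ Icc 0 t, |K r| ≤ |A| * t ^ (α - 1) := fun r hr => by
    have := hr.1
    calc |K r| ≤ A * r ^ (α - 1) := hK r hr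
      _ ≤ |A| * r ^ (α - 1) := by gcongr; exact le_abs_self A
      _ ≤ |A| * t ^ (α - 1) := by gcongr; exact hr.2
  rw [← intervalIntegral.integral_sub (intervalIntegrable_comp_sub_mul ht hK_meas hK_bdd hF)
    (intervalIntegrable_comp_sub_mul ht hK_meas hK_bdd hG)]
  simp_rw [← mul_sub]
  exact abs_integral_comp_sub_mul_le hα hω ht hK hFG

theorem abs_le_iSup_abs_div_mul {X : Type*} [TopologicalSpace X] {s : Set X} (hs : IsCompact s)
    {u w : X → ℝ} (hu : ContinuousOn u s) (hw : ∀ x ∈ s, 1 ≤ w x) {x : X} (hx : x ∈ s) :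
    |u x| ≤ (⨆ y : s, |u y| / w y) * w x := by
  obtain ⟨C, hC⟩ := hs.exists_bound_of_continuousOn hu
  have hbdd : BddAbove (range fun y : s => |u y| / w y) := ⟨C, by
    rintro _ ⟨y, rfl⟩
    exact (div_le_self (abs_nonneg _) (hw y y.2)).trans (hC y y.2)⟩
  rw [← div_le_iff₀ (by linarith [hw x hx])]
  exact le_ciSup hbdd (⟨x, hx⟩ : s)

theorem operator_contraction_general (α β lam mu T Lf ω : ℝ)
    (hα1 : 1 < α) (hαβ : α - β > 1)
    (hT : 0 < T) (hLf : 0 < Lf)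
    (f : ℝ → ℝ → ℝ)
    (hf_cont : ContinuousOn (fun p : ℝ × ℝ => f p.1 p.2)
      (Set.Icc 0 T ×ˢ Set.univ))
    (hf_lip : ∀ t ∈ Set.Icc (0 : ℝ) T, ∀ y z : ℝ, |f t y - f t z| ≤ Lf * |y - z|)
    (K : ℝ → ℝ) (hK_meas : Measurable K)
    (hK : ∀ s ∈ Set.Icc (0 : ℝ) T,
      |K s| ≤ s ^ (α - 1) * Real.exp (|lam| * s ^ (α - β) + |mu| * s ^ α))
    (g : ℝ → ℝ)
    (hω : ω > Lf * Real.Gamma α * Real.exp (|lam| * T ^ (α - β) + |mu| * T ^ α)) :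
    (∀ y z : ℝ → ℝ, Continuous y → Continuous z →
      (⨆ t : Set.Icc (0 : ℝ) T,
        |(g t + ∫ s in (0 : ℝ)..(t : ℝ), K ((t : ℝ) - s) * f s (y s)) -
          (g t + ∫ s in (0 : ℝ)..(t : ℝ), K ((t : ℝ) - s) * f s (z s))| /
          mittagLeffler α (ω * (t : ℝ) ^ α)) ≤
        (Real.Gamma α / ω) * Lf *
            Real.exp (|lam| * T ^ (α - β) + |mu| * T ^ α) *
          ⨆ t : Set.Icc (0 : ℝ) T, |y t - z t| / mittagLeffler α (ω * (t : ℝ) ^ α)) ∧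
    (Real.Gamma α / ω) * Lf * Real.exp (|lam| * T ^ (α - β) + |mu| * T ^ α) < 1 := by
  have hKA : ∀ r ∈ Icc 0 T,
      |K r| ≤ Real.exp (|lam| * T ^ (α - β) + |mu| * T ^ α) * r ^ (α - 1) := fun r hr => by
    refine (hK r hr).trans ?_
    rw [mul_comm]
    have := hr.1
    gcongr <;> linarith [hr.2]
  set A := Real.exp (|lam| * T ^ (α - β) + |mu| * T ^ α)
  have hω0 : 0 < ω := lt_of_le_of_lt (by positivity) hω
  refine ⟨fun y z hy hz => ?_, by
    rw [div_mul_eq_mul_div, div_mul_eq_mul_div, div_lt_one hω0]; linarith⟩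
  have hE : ∀ t ∈ Icc 0 T, 1 ≤ mittagLeffler α (ω * t ^ α) := fun t ht =>
    one_le_mittagLeffler hα1.le (by have := ht.1; positivity)
  have hFcont : ∀ x : ℝ → ℝ, Continuous x → ContinuousOn (fun s => f s (x s)) (Icc 0 T) :=
    fun x hx => hf_cont.comp (continuous_id.prodMk hx).continuousOn fun s hs => ⟨hs, mem_univ _⟩
  have : Nonempty (Icc 0 T) := ⟨⟨0, left_mem_Icc.2 hT.le⟩⟩
  set M := ⨆ t : Icc 0 T, |y t - z t| / mittagLeffler α (ω * (t : ℝ) ^ α)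
  have hM : 0 ≤ M := Real.iSup_nonneg fun t => div_nonneg (abs_nonneg _) (by linarith [hE t t.2])
  refine ciSup_le fun ⟨t, ht⟩ => ?_
  have hsub : Icc 0 t ⊆ Icc 0 T := Icc_subset_Icc_right ht.2
  have hfyz : ∀ s ∈ Icc 0 t, |f s (y s) - f s (z s)| ≤ Lf * M * mittagLeffler α (ω * s ^ α) :=
    fun s hs => (hf_lip s (hsub hs) _ _).trans <| by
      rw [mul_assoc]
      exact mul_le_mul_of_nonneg_left (abs_le_iSup_abs_div_mul isCompact_Icc
        (hy.sub hz).continuousOn hE (hsub hs)) hLf.le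
  rw [add_sub_add_left_eq_sub, div_le_iff₀ (by linarith [hE t ht])]
  calc _ ≤ A * (Lf * M) * (Gamma α / ω * (mittagLeffler α (ω * t ^ α) - 1)) :=
        abs_integral_sub_integral_le hα1.le hω0 ht.1 hK_meas (fun r hr => hKA r (hsub hr))
        ((hFcont y hy).mono hsub) ((hFcont z hz).mono hsub) hfyz
    _ ≤ A * (Lf * M) * (Gamma α / ω * mittagLeffler α (ω * t ^ α)) := by gcongr; linarith
    _ = _ := by ring

theorem operator_contraction (α β lam mu T Lf ω : ℝ)
    (hα1 : 1 < α) (hα2 : α < 2) (hβ0 : 0 < β) (hβ1 : β < 1) (hαβ : α - β > 1)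
    (h : ℝ) (hh : 0 < h) (hT : 0 < T) (hLf : 0 < Lf)
    (f : ℝ → ℝ → ℝ)
    (hf_cont : ContinuousOn (fun p : ℝ × ℝ => f p.1 p.2)
      (Set.Icc 0 T ×ˢ Set.univ))
    (hf_lip : ∀ t ∈ Set.Icc (0 : ℝ) T, ∀ y z : ℝ, |f t y - f t z| ≤ Lf * |y - z|)
    (K : ℝ → ℝ) (hK_meas : Measurable K)
    (hK : ∀ s ∈ Set.Icc (0 : ℝ) T,
      |K s| ≤ s ^ (α - 1) * Real.exp (|lam| * s ^ (α - β) + |mu| * s ^ α))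
    (g : ℝ → ℝ) (hg : Continuous g)
    (hω : ω > Lf * Real.Gamma α * Real.exp (|lam| * T ^ (α - β) + |mu| * T ^ α)) :
    (∀ y z : ℝ → ℝ, Continuous y → Continuous z →
      (⨆ t : Set.Icc (0 : ℝ) T,
        |(g t + ∫ s in (0 : ℝ)..(t : ℝ), K ((t : ℝ) - s) * f s (y s)) -
          (g t + ∫ s in (0 : ℝ)..(t : ℝ), K ((t : ℝ) - s) * f s (z s))| /
          mittagLeffler α (ω * (t : ℝ) ^ α)) ≤
        (Real.Gamma α / ω) * Lf *
            Real.exp (|lam| * T ^ (α - β) + |mu| * T ^ α) *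
          ⨆ t : Set.Icc (0 : ℝ) T, |y t - z t| / mittagLeffler α (ω * (t : ℝ) ^ α)) ∧
    (Real.Gamma α / ω) * Lf * Real.exp (|lam| * T ^ (α - β) + |mu| * T ^ α) < 1 :=
  operator_contraction_general α β lam mu T Lf ω hα1 hαβ hT hLf f hf_cont hf_lip K hK_meas hK g hω
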